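/- For every n ≥ 1, the identity P_n(a(y − b t), a² y, a³ y, …, a^n y) = a^n C_n(y, b t) holds in the polynomial ring ℚ[a, b, y, t], where C_n are the generalized Charlier polynomials. -/

import Mathlib

/-!
The Kailath–Segall polynomials `Pₙ(x)` are the coefficients of `exp (∑ₖ (-1)^{k+1} xₖ uᵏ / k)`:
both sequences start with `1` and satisfy `(n+1) cₙ₊₁ = ∑ⱼ (-1)ʲ cₙ₋ⱼ xⱼ₊₁`, which for the
exponential is the coefficient form of `(exp g)' = exp g · g'`. Replacing `xₖ` by `aᵏ xₖ`
multiplies `Pₙ` by `aⁿ`, and for `x₁ = y - bt`, `xₖ = y` (`k ≥ 2`) the series in the exponent is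
`y log(1 + u) - bt u`, the logarithm of the generating function `e^{-btu}(1+u)^y` of `Cₙ(y, bt)`.
-/

/-- The Kailath–Segall polynomials, defined by `P₀ = 1` and the recurrence
`Pₙ = (1/n)(Pₙ₋₁ x₁ − Pₙ₋₂ x₂ + ⋯ + (−1)^{n+1} P₀ xₙ)`. -/
noncomputable def KS {A : Type*} [CommRing A] [Algebra ℚ A] (x : ℕ → A) : ℕ → A
  | 0 => 1
  | n + 1 =>
      (((n : ℚ) + 1)⁻¹) •
        ∑ j ∈ Finset.range (n + 1), ((-1 : A) ^ j * KS x (n - j) * x (j + 1))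
  termination_by n => n
  decreasing_by omega

/-- The exponential of a formal power series with zero constant term:
`exp f = Σ_k f^k / k!`; only `k ≤ n` contribute to the `n`-th coefficient. -/
noncomputable def psExp {A : Type*} [CommRing A] [Algebra ℚ A]
    (f : PowerSeries A) : PowerSeries A :=
  PowerSeries.mk fun n =>
    ∑ k ∈ Finset.range (n + 1), ((k.factorial : ℚ))⁻¹ • PowerSeries.coeff n (f ^ k)

open PowerSeries Finset

theorem coeff_pow_eq_zero_of_lt {R : Type*} [CommRing R] {f : PowerSeries R}
    (hf : constantCoeff f = 0) {m k : ℕ} (h : m < k) :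
    coeff m (f ^ k) = 0 :=
  X_pow_dvd_iff.mp (pow_dvd_pow_of_dvd (X_dvd_iff.mpr hf) k) m h

section PowerSeriesExp

variable {A : Type*} [CommRing A] [Algebra ℚ A] {f : PowerSeries A}

theorem psExp_eq_subst_exp (hf : constantCoeff f = 0) : psExp f = (exp A).subst f := by
  ext n
  rw [psExp, coeff_mk, coeff_subst' (HasSubst.of_constantCoeff_zero' hf),
    finsum_eq_sum_of_support_subset _ (s := range (n + 1)) ?_]
  · refine sum_congr rfl fun k _ => ?_
    rw [coeff_exp, smul_eq_mul, ← Algebra.smul_def, one_div]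
  · intro k hk
    by_contra hkn
    simp only [coe_range, Set.mem_Iio, not_lt] at hkn
    exact hk (by simp only [coeff_pow_eq_zero_of_lt hf (show n < k by omega), smul_zero])

theorem derivative_psExp (hf : constantCoeff f = 0) :
    d⁄dX A (psExp f) = psExp f * d⁄dX A f := by
  rw [psExp_eq_subst_exp hf, derivative_subst (HasSubst.of_constantCoeff_zero' hf),
    derivative_exp]

theorem succ_nsmul_coeff_succ_psExp (hf : constantCoeff f = 0) (n : ℕ) :
    (n + 1) • coeff (n + 1) (psExp f) =
      ∑ j ∈ range (n + 1), coeff (n - j) (psExp f) * ((j + 1) • coeff (j + 1) f) := by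
  have h := congrArg (coeff n) (derivative_psExp hf)
  rw [coeff_derivative, coeff_mul, ← Nat.sum_antidiagonal_swap] at h
  simp only [Prod.fst_swap, Prod.snd_swap] at h
  rw [Nat.sum_antidiagonal_eq_sum_range_succ
    (fun i j => coeff j (psExp f) * coeff i (d⁄dX A f))] at h
  rw [nsmul_eq_mul, mul_comm, Nat.cast_succ, h]
  refine sum_congr rfl fun j _ => ?_
  rw [coeff_derivative, nsmul_eq_mul, Nat.cast_succ, mul_comm (coeff (j + 1) f)]

end PowerSeriesExp

section KailathSegall

variable {A : Type*} [CommRing A] [Algebra ℚ A]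

theorem KS_zero (x : ℕ → A) : KS x 0 = 1 := by
  rw [KS]

theorem succ_nsmul_KS_succ (x : ℕ → A) (n : ℕ) :
    (n + 1) • KS x (n + 1) = ∑ j ∈ range (n + 1), (-1) ^ j * KS x (n - j) * x (j + 1) := by
  rw [KS, ← Nat.cast_smul_eq_nsmul ℚ, smul_smul, Nat.cast_succ,
    mul_inv_cancel₀ (by positivity), one_smul]

theorem KS_eq_of_recurrence (x c : ℕ → A) (h₀ : c 0 = 1)
    (hsucc : ∀ n, (n + 1) • c (n + 1) = ∑ j ∈ range (n + 1), (-1) ^ j * c (n - j) * x (j + 1))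
    (n : ℕ) : KS x n = c n := by
  induction n using Nat.strong_induction_on with
  | _ n ih =>
    cases n with
    | zero => rw [KS_zero, h₀]
    | succ n =>
      have h : (n + 1) • KS x (n + 1) = (n + 1) • c (n + 1) := by
        rw [succ_nsmul_KS_succ, hsucc]
        exact sum_congr rfl fun j hj => by rw [ih (n - j) (by grind)]
      rw [← Nat.cast_smul_eq_nsmul ℚ, ← Nat.cast_smul_eq_nsmul ℚ] at h
      exact smul_right_injective A (by positivity) h

theorem KS_mul_pow (a : A) (z : ℕ → A) (n : ℕ) :
    KS (fun k => a ^ k * z k) n = a ^ n * KS z n := by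
  refine KS_eq_of_recurrence _ (fun n => a ^ n * KS z n) (by rw [KS_zero, pow_zero, one_mul])
    (fun m => ?_) n
  rw [← mul_smul_comm, succ_nsmul_KS_succ, mul_sum]
  refine sum_congr rfl fun j hj => ?_
  rw [show m + 1 = (m - j) + (j + 1) by grind, pow_add]
  ring

theorem KS_eq_coeff_psExp (x : ℕ → A) {f : PowerSeries A} (hf : constantCoeff f = 0)
    (hx : ∀ j, (j + 1) • coeff (j + 1) f = (-1) ^ j * x (j + 1)) (n : ℕ) :
    KS x n = coeff n (psExp f) := by
  refine KS_eq_of_recurrence _ (fun n => coeff n (psExp f)) (by simp [psExp]) (fun m => ?_) n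
  rw [succ_nsmul_coeff_succ_psExp hf]
  exact sum_congr rfl fun j _ => by rw [hx]; ring

end KailathSegall

section Charlier

variable {A : Type*} [CommRing A] [Algebra ℚ A]

/-- `y log(1 + u) - s u`, the logarithm of the Charlier generating function `e^{-su}(1+u)^y`. -/
noncomputable def logCharlierSeries (y s : A) : PowerSeries A :=
  mk fun k => if k = 0 then 0 else ((-1 : ℚ) ^ (k + 1) / k) • y - (if k = 1 then s else 0)

theorem constantCoeff_logCharlierSeries (y s : A) : constantCoeff (logCharlierSeries y s) = 0 := by
  rw [← coeff_zero_eq_constantCoeff_apply, logCharlierSeries, coeff_mk, if_pos rfl]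

theorem succ_nsmul_coeff_succ_logCharlierSeries (y s : A) (j : ℕ) :
    (j + 1) • coeff (j + 1) (logCharlierSeries y s) =
      (-1) ^ j * (if j + 1 = 1 then y - s else y) := by
  rw [logCharlierSeries, coeff_mk, if_neg j.succ_ne_zero, ← Nat.cast_smul_eq_nsmul ℚ, smul_sub,
    smul_smul, Nat.cast_succ, mul_div_cancel₀ _ (by positivity), Algebra.smul_def, map_pow,
    map_neg, map_one]
  split_ifs with hj
  · obtain rfl : j = 0 := by omega
    simp
  · rw [smul_zero, sub_zero]
    ring

end Charlier

/-- Here `a = X 0`, `b = X 1`, `y = X 2`, `t = X 3`, and the series under `psExp` is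
`logCharlierSeries y (b t)`. -/
theorem kailathSegall_charlier_general (n : ℕ) :
    KS (fun k => if k = 1 then
          (MvPolynomial.X 0 : MvPolynomial (Fin 4) ℚ) *
            (MvPolynomial.X 2 - MvPolynomial.X 1 * MvPolynomial.X 3)
        else MvPolynomial.X 0 ^ k * MvPolynomial.X 2) n =
      (MvPolynomial.X 0 : MvPolynomial (Fin 4) ℚ) ^ n *
        PowerSeries.coeff n (psExp (PowerSeries.mk fun k =>
          if k = 0 then 0
          else ((-1 : ℚ) ^ (k + 1) / k) • (MvPolynomial.X 2 : MvPolynomial (Fin 4) ℚ) -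
            (if k = 1 then MvPolynomial.X 1 * MvPolynomial.X 3 else 0))) := by
  have hx : (fun k => if k = 1 then
        (MvPolynomial.X 0 : MvPolynomial (Fin 4) ℚ) *
          (MvPolynomial.X 2 - MvPolynomial.X 1 * MvPolynomial.X 3)
      else MvPolynomial.X 0 ^ k * MvPolynomial.X 2) =
      fun k => MvPolynomial.X 0 ^ k *
        if k = 1 then MvPolynomial.X 2 - MvPolynomial.X 1 * MvPolynomial.X 3
        else MvPolynomial.X 2 := by
    funext k
    split_ifs with hk
    · rw [hk, pow_one]
    · rfl
  rw [hx, KS_mul_pow]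
  congr 1
  exact KS_eq_coeff_psExp _ (constantCoeff_logCharlierSeries _ _)
    (succ_nsmul_coeff_succ_logCharlierSeries _ _) n

/-- With `a = X 0`, `b = X 1`, `y = X 2`, `t = X 3` in `ℚ[a,b,y,t]`, for every `n ≥ 1`:
`Pₙ(a(y − bt), a² y, a³ y, …, aⁿ y) = aⁿ Cₙ(y, bt)`, where `Cₙ(x,s)` is the `n`-th
coefficient of the Charlier generating series
`e^{−su}(1+u)^x = exp(Σ_{k≥1} (((−1)^{k+1}/k) x − [k=1] s) uᵏ)`. -/
theorem kailathSegall_charlier (n : ℕ) (hn : 1 ≤ n) :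
    KS (fun k => if k = 1 then
          (MvPolynomial.X 0 : MvPolynomial (Fin 4) ℚ) *
            (MvPolynomial.X 2 - MvPolynomial.X 1 * MvPolynomial.X 3)
        else MvPolynomial.X 0 ^ k * MvPolynomial.X 2) n =
      (MvPolynomial.X 0 : MvPolynomial (Fin 4) ℚ) ^ n *
        PowerSeries.coeff n (psExp (PowerSeries.mk fun k =>
          if k = 0 then 0
          else ((-1 : ℚ) ^ (k + 1) / k) • (MvPolynomial.X 2 : MvPolynomial (Fin 4) ℚ) -
            (if k = 1 then MvPolynomial.X 1 * MvPolynomial.X 3 else 0))) :=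
  kailathSegall_charlier_general n
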